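/- Let 𝔥 be a three-dimensional real Lie algebra with a positive-definite inner product g, and suppose there exist a g-orthonormal basis e₁,e₂,e₃ of 𝔥 and real numbers a₁₂, a₁₃, a₂₃, b₁₂, b₁₃, not all zero, such that [e₁,e₂] = −a₁₂e₁ − b₁₂e₂ + (a₂₃−b₁₃)e₃, [e₁,e₃] = −a₁₃e₁ − b₁₃e₂ + b₁₂e₃, [e₂,e₃] = −a₂₃e₁ + a₁₃e₂ − a₁₂e₃. Then either (i) there exist a basis x,y,z of 𝔥 with [x,y]=2z, [z,x]=2y, [z,y]=2x which is g-orthogonal and real numbers μ ≥ ν > 0 with g(x,x) = μ+ν, g(y,y) = μ, g(z,z) = ν; or (ii) there exist a basis x,y,z of 𝔥 with [x,y]=0, [z,x]=x, [z,y]=−y which is g-orthogonal, with g(x,x) = g(y,y) = 1 and g(z,z) = ν for some ν > 0. -/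

import Mathlib

open Module

private lemma mkBasis {𝔥 : Type} [LieRing 𝔥] [LieAlgebra ℝ 𝔥] [FiniteDimensional ℝ 𝔥]
    (hfin : Module.finrank ℝ 𝔥 = 3) (g : LinearMap.BilinForm ℝ 𝔥)
    (v : Fin 3 → 𝔥) (r : Fin 3 → ℝ) (hr : ∀ i, r i ≠ 0)
    (h : ∀ i j, g (v i) (v j) = if i = j then r i else 0) :
    ∃ b : Basis (Fin 3) ℝ 𝔥, ⇑b = v := by
  have li : LinearIndependent ℝ v := by
    rw [Fintype.linearIndependent_iff]
    intro c hc i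
    have h2 : g (v i) (∑ j, c j • v j) = 0 := by rw [hc]; simp
    simp only [map_sum, map_smul, h, smul_eq_mul, mul_ite, mul_zero,
      Finset.sum_ite_eq, Finset.mem_univ, if_true] at h2
    exact (mul_eq_zero.mp h2).resolve_right (hr i)
  exact ⟨basisOfLinearIndependentOfCardEqFinrank li (by simp [hfin]),
    coe_basisOfLinearIndependentOfCardEqFinrank _ _⟩

private lemma caseE11 {𝔥 : Type} [LieRing 𝔥] [LieAlgebra ℝ 𝔥] [FiniteDimensional ℝ 𝔥]
    (hfin : Module.finrank ℝ 𝔥 = 3) (g : LinearMap.BilinForm ℝ 𝔥)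
    (f : Fin 3 → 𝔥) (l : Fin 3 → ℝ)
    (ho : ∀ i j, g (f i) (f j) = if i = j then 1 else 0)
    (hb12 : ⁅f 1, f 2⁆ = l 0 • f 0) (hb20 : ⁅f 2, f 0⁆ = l 1 • f 1)
    (hb01 : ⁅f 0, f 1⁆ = l 2 • f 2)
    (hsum : l 0 + l 1 + l 2 = 0) (hl2 : l 2 = 0) (hl0 : l 0 ≠ 0) :
    (∃ b : Basis (Fin 3) ℝ 𝔥, ∃ ν : ℝ, 0 < ν ∧
        ⁅b 0, b 1⁆ = 0 ∧ ⁅b 2, b 0⁆ = b 0 ∧ ⁅b 2, b 1⁆ = -b 1 ∧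
        (∀ i j : Fin 3, i ≠ j → g (b i) (b j) = 0) ∧
        g (b 0) (b 0) = 1 ∧ g (b 1) (b 1) = 1 ∧ g (b 2) (b 2) = ν) := by
  have hl1 : l 1 = -l 0 := by linarith
  have o00 : g (f 0) (f 0) = 1 := by simpa using ho 0 0
  have o01 : g (f 0) (f 1) = 0 := by simpa using ho 0 1
  have o02 : g (f 0) (f 2) = 0 := by simpa using ho 0 2
  have o10 : g (f 1) (f 0) = 0 := by simpa using ho 1 0
  have o11 : g (f 1) (f 1) = 1 := by simpa using ho 1 1
  have o12 : g (f 1) (f 2) = 0 := by simpa using ho 1 2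
  have o20 : g (f 2) (f 0) = 0 := by simpa using ho 2 0
  have o21 : g (f 2) (f 1) = 0 := by simpa using ho 2 1
  have o22 : g (f 2) (f 2) = 1 := by simpa using ho 2 2
  set s : ℝ := Real.sqrt 2 / 2 with hs
  have hs2 : s ^ 2 = 1/2 := by
    rw [hs, div_pow, sq, Real.mul_self_sqrt (by norm_num)]; norm_num
  set v : Fin 3 → 𝔥 := ![s • f 0 - s • f 1, s • f 0 + s • f 1, (1 / l 0) • f 2] with hv
  have hgv : ∀ i j, g (v i) (v j) = if i = j then (![1, 1, (1/l 0)^2] : Fin 3 → ℝ) i else 0 := by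
    intro i j
    fin_cases i <;> fin_cases j <;>
      simp [hv, map_sub, map_add, map_smul, LinearMap.sub_apply,
        LinearMap.add_apply, LinearMap.smul_apply, smul_eq_mul,
        o00, o01, o02, o10, o11, o12, o20, o21, o22,
        Real.sq_sqrt (show (0:ℝ) ≤ 2 by norm_num)] <;>
      (try norm_num) <;> (try ring) <;> (try linarith [hs2]) <;> (try norm_num [Real.sq_sqrt])
  obtain ⟨b, hb⟩ := mkBasis hfin g v ![1, 1, (1/l 0)^2] (by
      intro i; fin_cases i <;> simp <;> positivity) hgv
  have hb0 : b 0 = v 0 := by rw [hb]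
  have hb1 : b 1 = v 1 := by rw [hb]
  have hb2 : b 2 = v 2 := by rw [hb]
  have h10 : ⁅f 1, f 0⁆ = -(l 2 • f 2) := by rw [← lie_skew, hb01]
  have h21 : ⁅f 2, f 1⁆ = -(l 0 • f 0) := by rw [← lie_skew, hb12]
  refine ⟨b, (1/l 0)^2, by positivity, ?_, ?_, ?_, ?_, ?_, ?_, ?_⟩
  · rw [hb0, hb1]
    show ⁅v 0, v 1⁆ = 0
    simp only [hv, Fin.isValue, Matrix.cons_val_zero, Matrix.cons_val_one, Matrix.head_cons,
      lie_sub, sub_lie, lie_add, add_lie, lie_smul, smul_lie, lie_self, hb01, h10, hl2]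
    module
  · rw [hb0, hb2]
    show ⁅v 2, v 0⁆ = v 0
    simp only [hv, Fin.isValue, Matrix.cons_val_zero, Matrix.cons_val_two, Matrix.tail_cons,
      Matrix.head_cons, lie_sub, lie_smul, smul_lie, hb20, h21, hl1]
    match_scalars <;> field_simp
  · rw [hb1, hb2]
    show ⁅v 2, v 1⁆ = -v 1
    simp only [hv, Fin.isValue, Matrix.cons_val_one, Matrix.cons_val_two, Matrix.tail_cons,
      Matrix.head_cons, lie_add, lie_smul, smul_lie, hb20, h21, hl1, Matrix.cons_val_zero]
    match_scalars <;> field_simp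
  · intro i j hij
    rw [hb, hgv, if_neg hij]
  · rw [hb0]; show g (v 0) (v 0) = 1
    rw [hgv 0 0]; simp
  · rw [hb1]; show g (v 1) (v 1) = 1
    rw [hgv 1 1]; simp
  · rw [hb2]; show g (v 2) (v 2) = (1/l 0)^2
    rw [hgv 2 2]; simp

private lemma caseSl2 {𝔥 : Type} [LieRing 𝔥] [LieAlgebra ℝ 𝔥] [FiniteDimensional ℝ 𝔥]
    (hfin : Module.finrank ℝ 𝔥 = 3) (g : LinearMap.BilinForm ℝ 𝔥)
    (f : Fin 3 → 𝔥) (l : Fin 3 → ℝ)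
    (ho : ∀ i j, g (f i) (f j) = if i = j then 1 else 0)
    (hb12 : ⁅f 1, f 2⁆ = l 0 • f 0) (hb20 : ⁅f 2, f 0⁆ = l 1 • f 1)
    (hb01 : ⁅f 0, f 1⁆ = l 2 • f 2)
    (hsum : l 0 + l 1 + l 2 = 0) (hl2 : 0 < l 2) (h21 : l 2 ≤ l 1) :
    (∃ b : Basis (Fin 3) ℝ 𝔥, ∃ μ ν : ℝ, ν ≤ μ ∧ 0 < ν ∧
        ⁅b 0, b 1⁆ = (2 : ℝ) • b 2 ∧ ⁅b 2, b 0⁆ = (2 : ℝ) • b 1 ∧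
        ⁅b 2, b 1⁆ = (2 : ℝ) • b 0 ∧
        (∀ i j : Fin 3, i ≠ j → g (b i) (b j) = 0) ∧
        g (b 0) (b 0) = μ + ν ∧ g (b 1) (b 1) = μ ∧ g (b 2) (b 2) = ν) := by
  have hl1 : 0 < l 1 := lt_of_lt_of_le hl2 h21
  have hl12 : 0 < l 1 + l 2 := by linarith
  obtain ⟨sa, hsa, hsap⟩ : ∃ x : ℝ, x ^ 2 = l 1 ∧ 0 < x :=
    ⟨Real.sqrt (l 1), Real.sq_sqrt hl1.le, Real.sqrt_pos.2 hl1⟩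
  obtain ⟨sb, hsb, hsbp⟩ : ∃ x : ℝ, x ^ 2 = l 2 ∧ 0 < x :=
    ⟨Real.sqrt (l 2), Real.sq_sqrt hl2.le, Real.sqrt_pos.2 hl2⟩
  obtain ⟨sc, hsc, hscp⟩ : ∃ x : ℝ, x ^ 2 = l 1 + l 2 ∧ 0 < x :=
    ⟨Real.sqrt (l 1 + l 2), Real.sq_sqrt hl12.le, Real.sqrt_pos.2 hl12⟩
  have hba : sb ≤ sa := by nlinarith [hsa, hsb, hsap, hsbp]
  have hl0e : l 0 = -(sc ^ 2) := by rw [hsc]; linarith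
  obtain ⟨α, hα⟩ : ∃ x : ℝ, x = 2/(sa*sb) := ⟨_, rfl⟩
  obtain ⟨β, hβ⟩ : ∃ x : ℝ, x = 2/(sc*sb) := ⟨_, rfl⟩
  obtain ⟨γ, hγ⟩ : ∃ x : ℝ, x = 2/(sc*sa) := ⟨_, rfl⟩
  have hαp : 0 < α := by rw [hα]; positivity
  have hβp : 0 < β := by rw [hβ]; positivity
  have hγp : 0 < γ := by rw [hγ]; positivity
  have hγβ : γ ≤ β := by
    rw [hβ, hγ]
    exact div_le_div_of_nonneg_left (by norm_num) (by positivity)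
      (mul_le_mul_of_nonneg_left hba hscp.le)
  have id1 : α * β * l 2 = 2 * γ := by
    rw [← hsb, hα, hβ, hγ]; field_simp
  have id2 : γ * α * l 1 = 2 * β := by
    rw [← hsa, hα, hβ, hγ]; field_simp
  have id3 : -(γ * β * l 0) = 2 * α := by
    rw [hl0e, hα, hβ, hγ]; field_simp
  have id4 : α ^ 2 = β ^ 2 + γ ^ 2 := by
    have hscs : sc ^ 2 = sa ^ 2 + sb ^ 2 := by rw [hsa, hsb, hsc]
    have h1 : sa ≠ 0 := ne_of_gt hsap
    have h2 : sb ≠ 0 := ne_of_gt hsbp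
    have h3 : sc ≠ 0 := ne_of_gt hscp
    rw [hα, hβ, hγ, div_pow, div_pow, div_pow]
    rw [div_add_div _ _ (by positivity) (by positivity), div_eq_div_iff (by positivity) (by positivity)]
    ring_nf
    nlinarith [hscs, sq_nonneg (sa*sb*sc)]
  have o00 : g (f 0) (f 0) = 1 := by simpa using ho 0 0
  have o01 : g (f 0) (f 1) = 0 := by simpa using ho 0 1
  have o02 : g (f 0) (f 2) = 0 := by simpa using ho 0 2
  have o10 : g (f 1) (f 0) = 0 := by simpa using ho 1 0
  have o11 : g (f 1) (f 1) = 1 := by simpa using ho 1 1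
  have o12 : g (f 1) (f 2) = 0 := by simpa using ho 1 2
  have o20 : g (f 2) (f 0) = 0 := by simpa using ho 2 0
  have o21 : g (f 2) (f 1) = 0 := by simpa using ho 2 1
  have o22 : g (f 2) (f 2) = 1 := by simpa using ho 2 2
  set v : Fin 3 → 𝔥 := ![α • f 0, β • f 1, γ • f 2] with hv
  have hgv : ∀ i j, g (v i) (v j) = if i = j then (![α^2, β^2, γ^2] : Fin 3 → ℝ) i else 0 := by
    intro i j
    fin_cases i <;> fin_cases j <;>
      simp [hv, map_smul, LinearMap.smul_apply, smul_eq_mul,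
        o00, o01, o02, o10, o11, o12, o20, o21, o22] <;> ring
  obtain ⟨b, hb⟩ := mkBasis hfin g v ![α^2, β^2, γ^2] (by
      intro i; fin_cases i <;> simp <;> positivity) hgv
  have hb0 : b 0 = v 0 := by rw [hb]
  have hb1 : b 1 = v 1 := by rw [hb]
  have hb2 : b 2 = v 2 := by rw [hb]
  have h21' : ⁅f 2, f 1⁆ = -(l 0 • f 0) := by rw [← lie_skew, hb12]
  refine ⟨b, β^2, γ^2, ?_, by positivity, ?_, ?_, ?_, ?_, ?_, ?_, ?_⟩
  · -- γ^2 ≤ β^2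
    exact pow_le_pow_left₀ hγp.le hγβ 2
  · rw [hb0, hb1, hb2]
    show ⁅v 0, v 1⁆ = (2:ℝ) • v 2
    simp only [hv, Matrix.cons_val_zero, Matrix.cons_val_one, Matrix.head_cons,
      Matrix.cons_val_two, Matrix.tail_cons, smul_lie, lie_smul, hb01,
      smul_smul]
    match_scalars
    linear_combination id1
  · rw [hb0, hb1, hb2]
    show ⁅v 2, v 0⁆ = (2:ℝ) • v 1
    simp only [hv, Matrix.cons_val_zero, Matrix.cons_val_one, Matrix.head_cons,
      Matrix.cons_val_two, Matrix.tail_cons, smul_lie, lie_smul, hb20, smul_smul]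
    match_scalars
    linear_combination id2
  · rw [hb0, hb1, hb2]
    show ⁅v 2, v 1⁆ = (2:ℝ) • v 0
    simp only [hv, Matrix.cons_val_zero, Matrix.cons_val_one, Matrix.head_cons,
      Matrix.cons_val_two, Matrix.tail_cons, smul_lie, lie_smul, h21', smul_neg,
      smul_smul, neg_smul]
    match_scalars
    linear_combination id3
  · intro i j hij
    rw [hb, hgv, if_neg hij]
  · rw [hb0]; show g (v 0) (v 0) = β^2 + γ^2
    rw [hgv 0 0]; simpa using id4
  · rw [hb1]; show g (v 1) (v 1) = β^2
    rw [hgv 1 1]; simp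
  · rw [hb2]; show g (v 2) (v 2) = γ^2
    rw [hgv 2 2]; simp

section Core

variable {𝔥 : Type} [LieRing 𝔥] [LieAlgebra ℝ 𝔥] [FiniteDimensional ℝ 𝔥]

private def Concl (g : LinearMap.BilinForm ℝ 𝔥) : Prop :=
  (∃ b : Basis (Fin 3) ℝ 𝔥, ∃ μ ν : ℝ, ν ≤ μ ∧ 0 < ν ∧
        ⁅b 0, b 1⁆ = (2 : ℝ) • b 2 ∧ ⁅b 2, b 0⁆ = (2 : ℝ) • b 1 ∧
        ⁅b 2, b 1⁆ = (2 : ℝ) • b 0 ∧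
        (∀ i j : Fin 3, i ≠ j → g (b i) (b j) = 0) ∧
        g (b 0) (b 0) = μ + ν ∧ g (b 1) (b 1) = μ ∧ g (b 2) (b 2) = ν) ∨
      (∃ b : Basis (Fin 3) ℝ 𝔥, ∃ ν : ℝ, 0 < ν ∧
        ⁅b 0, b 1⁆ = 0 ∧ ⁅b 2, b 0⁆ = b 0 ∧ ⁅b 2, b 1⁆ = -b 1 ∧
        (∀ i j : Fin 3, i ≠ j → g (b i) (b j) = 0) ∧
        g (b 0) (b 0) = 1 ∧ g (b 1) (b 1) = 1 ∧ g (b 2) (b 2) = ν)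



private lemma core2 (hfin : Module.finrank ℝ 𝔥 = 3) (g : LinearMap.BilinForm ℝ 𝔥)
    (f : Fin 3 → 𝔥) (l : Fin 3 → ℝ)
    (ho : ∀ i j, g (f i) (f j) = if i = j then 1 else 0)
    (hb12 : ⁅f 1, f 2⁆ = l 0 • f 0) (hb20 : ⁅f 2, f 0⁆ = l 1 • f 1)
    (hb01 : ⁅f 0, f 1⁆ = l 2 • f 2)
    (hsum : l 0 + l 1 + l 2 = 0) (hnz : ¬(l 0 = 0 ∧ l 1 = 0 ∧ l 2 = 0))
    (h01 : l 0 ≤ l 1) (h12 : l 1 ≤ l 2) : Concl g := by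
  have o00 : g (f 0) (f 0) = 1 := by simpa using ho 0 0
  have o01 : g (f 0) (f 1) = 0 := by simpa using ho 0 1
  have o02 : g (f 0) (f 2) = 0 := by simpa using ho 0 2
  have o10 : g (f 1) (f 0) = 0 := by simpa using ho 1 0
  have o11 : g (f 1) (f 1) = 1 := by simpa using ho 1 1
  have o12 : g (f 1) (f 2) = 0 := by simpa using ho 1 2
  have o20 : g (f 2) (f 0) = 0 := by simpa using ho 2 0
  have o21 : g (f 2) (f 1) = 0 := by simpa using ho 2 1
  have o22 : g (f 2) (f 2) = 1 := by simpa using ho 2 2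
  have s10 : ⁅f 1, f 0⁆ = -(l 2 • f 2) := by rw [← lie_skew, hb01]
  have s21 : ⁅f 2, f 1⁆ = -(l 0 • f 0) := by rw [← lie_skew, hb12]
  have s02 : ⁅f 0, f 2⁆ = -(l 1 • f 1) := by rw [← lie_skew, hb20]
  have hl0 : l 0 < 0 := by
    by_contra hc
    push_neg at hc
    exact hnz ⟨by linarith, by linarith, by linarith⟩
  have hl2 : 0 < l 2 := by
    by_contra hc
    push_neg at hc
    exact hnz ⟨by linarith, by linarith, by linarith⟩
  rcases lt_trichotomy (l 1) 0 with h | h | h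
  · -- l 1 < 0 : sl2 with tuple (-f2, f0, f1), λ = (-l2, -l0, -l1)
    left
    apply caseSl2 hfin g ![-f 2, f 0, f 1] ![-l 2, -l 0, -l 1]
    · intro i j
      fin_cases i <;> fin_cases j <;>
        simp [map_neg, LinearMap.neg_apply, o00, o01, o02, o10, o11, o12, o20, o21, o22]
    · show ⁅f 0, f 1⁆ = -l 2 • -f 2
      rw [hb01]; module
    · show ⁅f 1, -f 2⁆ = -l 0 • f 0
      rw [lie_neg, hb12]; module
    · show ⁅-f 2, f 0⁆ = -l 1 • f 1
      rw [neg_lie, hb20]; module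
    · show -l 2 + -l 0 + -l 1 = 0
      linarith
    · show (0:ℝ) < -l 1
      linarith
    · show -l 1 ≤ -l 0
      linarith
  · -- l 1 = 0 : e(1,1) with tuple (-f0, f2, f1), λ = (l0, l2, l1)
    right
    apply caseE11 hfin g ![-f 0, f 2, f 1] ![l 0, l 2, l 1]
    · intro i j
      fin_cases i <;> fin_cases j <;>
        simp [map_neg, LinearMap.neg_apply, o00, o01, o02, o10, o11, o12, o20, o21, o22]
    · show ⁅f 2, f 1⁆ = l 0 • -f 0
      rw [s21]; module
    · show ⁅f 1, -f 0⁆ = l 2 • f 2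
      rw [lie_neg, s10]; module
    · show ⁅-f 0, f 2⁆ = l 1 • f 1
      rw [neg_lie, s02]; module
    · show l 0 + l 2 + l 1 = 0
      linarith
    · show l 1 = 0
      exact h
    · show l 0 ≠ 0
      exact hl0.ne
  · -- l 1 > 0 : sl2 with tuple (-f0, f2, f1), λ = (l0, l2, l1)
    left
    apply caseSl2 hfin g ![-f 0, f 2, f 1] ![l 0, l 2, l 1]
    · intro i j
      fin_cases i <;> fin_cases j <;>
        simp [map_neg, LinearMap.neg_apply, o00, o01, o02, o10, o11, o12, o20, o21, o22]
    · show ⁅f 2, f 1⁆ = l 0 • -f 0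
      rw [s21]; module
    · show ⁅f 1, -f 0⁆ = l 2 • f 2
      rw [lie_neg, s10]; module
    · show ⁅-f 0, f 2⁆ = l 1 • f 1
      rw [neg_lie, s02]; module
    · show l 0 + l 2 + l 1 = 0
      linarith
    · show (0:ℝ) < l 1
      exact h
    · show l 1 ≤ l 2
      exact h12

private lemma core (hfin : Module.finrank ℝ 𝔥 = 3) (g : LinearMap.BilinForm ℝ 𝔥)
    (f : Fin 3 → 𝔥) (l : Fin 3 → ℝ)
    (ho : ∀ i j, g (f i) (f j) = if i = j then 1 else 0)
    (hb12 : ⁅f 1, f 2⁆ = l 0 • f 0) (hb20 : ⁅f 2, f 0⁆ = l 1 • f 1)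
    (hb01 : ⁅f 0, f 1⁆ = l 2 • f 2)
    (hsum : l 0 + l 1 + l 2 = 0) (hnz : ¬(l 0 = 0 ∧ l 1 = 0 ∧ l 2 = 0)) : Concl g := by
  have s10 : ⁅f 1, f 0⁆ = -(l 2 • f 2) := by rw [← lie_skew, hb01]
  have s21 : ⁅f 2, f 1⁆ = -(l 0 • f 0) := by rw [← lie_skew, hb12]
  have s02 : ⁅f 0, f 2⁆ = -(l 1 • f 1) := by rw [← lie_skew, hb20]
  rcases le_total (l 0) (l 1) with h01 | h01 <;> rcases le_total (l 1) (l 2) with h12 | h12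
  · exact core2 hfin g f l ho hb12 hb20 hb01 hsum hnz h01 h12
  · rcases le_total (l 0) (l 2) with h02 | h02
    · -- order (l0, l2, l1): tuple (-f0, f2, f1)
      apply core2 hfin g ![-f 0, f 2, f 1] ![l 0, l 2, l 1] _ _ _ _ _ _ h02 h12
      · intro i j
        fin_cases i <;> fin_cases j <;>
          simp [map_neg, LinearMap.neg_apply, ho 0 0, ho 0 1, ho 0 2, ho 1 0, ho 1 1, ho 1 2,
            ho 2 0, ho 2 1, ho 2 2]
      · show ⁅f 2, f 1⁆ = l 0 • -f 0
        rw [s21]; module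
      · show ⁅f 1, -f 0⁆ = l 2 • f 2
        rw [lie_neg, s10]; module
      · show ⁅-f 0, f 2⁆ = l 1 • f 1
        rw [neg_lie, s02]; module
      · show l 0 + l 2 + l 1 = 0
        linarith
      · exact fun ⟨a, b, c⟩ => hnz ⟨a, c, b⟩
    · -- order (l2, l0, l1): tuple (f2, f0, f1)
      apply core2 hfin g ![f 2, f 0, f 1] ![l 2, l 0, l 1] _ _ _ _ _ _ h02 h01
      · intro i j
        fin_cases i <;> fin_cases j <;>
          simp [ho 0 0, ho 0 1, ho 0 2, ho 1 0, ho 1 1, ho 1 2, ho 2 0, ho 2 1, ho 2 2]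
      · exact hb01
      · exact hb12
      · exact hb20
      · show l 2 + l 0 + l 1 = 0
        linarith
      · exact fun ⟨a, b, c⟩ => hnz ⟨b, c, a⟩
  · rcases le_total (l 0) (l 2) with h02 | h02
    · -- order (l1, l0, l2): tuple (f1, f0, -f2)
      apply core2 hfin g ![f 1, f 0, -f 2] ![l 1, l 0, l 2] _ _ _ _ _ _ h01 h02
      · intro i j
        fin_cases i <;> fin_cases j <;>
          simp [map_neg, LinearMap.neg_apply, ho 0 0, ho 0 1, ho 0 2, ho 1 0, ho 1 1, ho 1 2,
            ho 2 0, ho 2 1, ho 2 2]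
      · show ⁅f 0, -f 2⁆ = l 1 • f 1
        rw [lie_neg, s02]; module
      · show ⁅-f 2, f 1⁆ = l 0 • f 0
        rw [neg_lie, s21]; module
      · show ⁅f 1, f 0⁆ = l 2 • -f 2
        rw [s10]; module
      · show l 1 + l 0 + l 2 = 0
        linarith
      · exact fun ⟨a, b, c⟩ => hnz ⟨b, a, c⟩
    · -- order (l1, l2, l0): tuple (f1, f2, f0)
      apply core2 hfin g ![f 1, f 2, f 0] ![l 1, l 2, l 0] _ _ _ _ _ _ h12 h02
      · intro i j
        fin_cases i <;> fin_cases j <;>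
          simp [ho 0 0, ho 0 1, ho 0 2, ho 1 0, ho 1 1, ho 1 2, ho 2 0, ho 2 1, ho 2 2]
      · exact hb20
      · exact hb01
      · exact hb12
      · show l 1 + l 2 + l 0 = 0
        linarith
      · exact fun ⟨a, b, c⟩ => hnz ⟨c, a, b⟩
  · -- order (l2, l1, l0): tuple (f2, -f1, f0)
    apply core2 hfin g ![f 2, -f 1, f 0] ![l 2, l 1, l 0] _ _ _ _ _ _ h12 h01
    · intro i j
      fin_cases i <;> fin_cases j <;>
        simp [map_neg, LinearMap.neg_apply, ho 0 0, ho 0 1, ho 0 2, ho 1 0, ho 1 1, ho 1 2,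
          ho 2 0, ho 2 1, ho 2 2]
    · show ⁅-f 1, f 0⁆ = l 2 • f 2
      rw [neg_lie, s10]; module
    · show ⁅f 0, f 2⁆ = l 1 • -f 1
      rw [s02]; module
    · show ⁅f 2, -f 1⁆ = l 0 • f 0
      rw [lie_neg, s21]; module
    · show l 2 + l 1 + l 0 = 0
      linarith
    · exact fun ⟨a, b, c⟩ => hnz ⟨c, b, a⟩

end Core



/-!
STATEMENT 13: classification of three-dimensional Riemannian Lie algebras admitting
left-invariant harmonic spinors.
-/

/-- Let `𝔥` be a three-dimensional real Lie algebra with a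
positive-definite inner product `g` admitting a `g`-orthonormal basis `e₀,e₁,e₂` whose
brackets take the stated five-parameter form (with not all parameters zero).  Then either
(i) there is a `g`-orthogonal basis `x,y,z` with `[x,y]=2z`, `[z,x]=2y`, `[z,y]=2x` and
`g(x,x) = μ+ν`, `g(y,y) = μ`, `g(z,z) = ν` for some `μ ≥ ν > 0`; or (ii) there is a
`g`-orthogonal basis `x,y,z` with `[x,y]=0`, `[z,x]=x`, `[z,y]=−y` and
`g(x,x) = g(y,y) = 1`, `g(z,z) = ν` for some `ν > 0`. -/
theorem riemannian_harmonic_classification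
    {𝔥 : Type} [LieRing 𝔥] [LieAlgebra ℝ 𝔥]
    (g : LinearMap.BilinForm ℝ 𝔥)
    (hsymm : ∀ u w : 𝔥, g u w = g w u)
    (hpos : ∀ u : 𝔥, u ≠ 0 → 0 < g u u)
    (e : Basis (Fin 3) ℝ 𝔥)
    (horth : ∀ i j : Fin 3, g (e i) (e j) = if i = j then 1 else 0)
    (a₁₂ a₁₃ a₂₃ b₁₂ b₁₃ : ℝ)
    (hne : (a₁₂, a₁₃, a₂₃, b₁₂, b₁₃) ≠ (0, 0, 0, 0, 0))
    (h12 : ⁅e 0, e 1⁆ = -a₁₂ • e 0 - b₁₂ • e 1 + (a₂₃ - b₁₃) • e 2)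
    (h13 : ⁅e 0, e 2⁆ = -a₁₃ • e 0 - b₁₃ • e 1 + b₁₂ • e 2)
    (h23 : ⁅e 1, e 2⁆ = -a₂₃ • e 0 + a₁₃ • e 1 - a₁₂ • e 2) :
    (∃ b : Basis (Fin 3) ℝ 𝔥, ∃ μ ν : ℝ, ν ≤ μ ∧ 0 < ν ∧
        ⁅b 0, b 1⁆ = (2 : ℝ) • b 2 ∧ ⁅b 2, b 0⁆ = (2 : ℝ) • b 1 ∧
        ⁅b 2, b 1⁆ = (2 : ℝ) • b 0 ∧
        (∀ i j : Fin 3, i ≠ j → g (b i) (b j) = 0) ∧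
        g (b 0) (b 0) = μ + ν ∧ g (b 1) (b 1) = μ ∧ g (b 2) (b 2) = ν) ∨
      (∃ b : Basis (Fin 3) ℝ 𝔥, ∃ ν : ℝ, 0 < ν ∧
        ⁅b 0, b 1⁆ = 0 ∧ ⁅b 2, b 0⁆ = b 0 ∧ ⁅b 2, b 1⁆ = -b 1 ∧
        (∀ i j : Fin 3, i ≠ j → g (b i) (b j) = 0) ∧
        g (b 0) (b 0) = 1 ∧ g (b 1) (b 1) = 1 ∧ g (b 2) (b 2) = ν) := by
  haveI : FiniteDimensional ℝ 𝔥 := Module.Basis.finiteDimensional_of_finite e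
  have hfin : Module.finrank ℝ 𝔥 = 3 := by
    rw [Module.finrank_eq_card_basis e]; simp
  -- the structure matrix
  set M : Matrix (Fin 3) (Fin 3) ℝ :=
    !![-a₂₃, a₁₃, -a₁₂; a₁₃, b₁₃, -b₁₂; -a₁₂, -b₁₂, a₂₃ - b₁₃] with hM'
  have hM : M.IsHermitian := by
    show Matrix.conjTranspose M = M
    ext i j
    fin_cases i <;> fin_cases j <;> simp [hM', Matrix.conjTranspose_apply]
  set U : Matrix (Fin 3) (Fin 3) ℝ := (hM.eigenvectorUnitary : Matrix (Fin 3) (Fin 3) ℝ) with hU'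
  set lam : Fin 3 → ℝ := hM.eigenvalues with hlam'
  have hU2 : U * star U = 1 := Matrix.mem_unitaryGroup_iff.mp (hM.eigenvectorUnitary).2
  have hU1 : star U * U = 1 := Matrix.mem_unitaryGroup_iff'.mp (hM.eigenvectorUnitary).2
  have hspec : M = U * Matrix.diagonal lam * star U := by
    have h := hM.spectral_theorem
    rw [show (RCLike.ofReal ∘ hM.eigenvalues : Fin 3 → ℝ) = lam from rfl] at h
    exact h
  -- entrywise column orthonormality
  have hcol : ∀ i j, U 0 i * U 0 j + U 1 i * U 1 j + U 2 i * U 2 j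
      = if i = j then 1 else 0 := by
    intro i j
    have h := congrFun (congrFun hU1 i) j
    simpa [Matrix.mul_apply, Fin.sum_univ_three, Matrix.star_apply, Matrix.one_apply,
      mul_comm] using h
  -- entrywise row orthonormality
  have hrow : ∀ i j, U i 0 * U j 0 + U i 1 * U j 1 + U i 2 * U j 2
      = if i = j then 1 else 0 := by
    intro i j
    have h := congrFun (congrFun hU2 i) j
    simpa [Matrix.mul_apply, Fin.sum_univ_three, Matrix.star_apply, Matrix.one_apply] using h
  have hr00 : U 0 0 * U 0 0 + U 0 1 * U 0 1 + U 0 2 * U 0 2 = 1 := by simpa using hrow 0 0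
  have hr01 : U 0 0 * U 1 0 + U 0 1 * U 1 1 + U 0 2 * U 1 2 = 0 := by
    have := hrow 0 1; simpa using this
  have hr02 : U 0 0 * U 2 0 + U 0 1 * U 2 1 + U 0 2 * U 2 2 = 0 := by
    have := hrow 0 2; simpa using this
  have hr10 : U 1 0 * U 0 0 + U 1 1 * U 0 1 + U 1 2 * U 0 2 = 0 := by
    have := hrow 1 0; simpa using this
  have hr11 : U 1 0 * U 1 0 + U 1 1 * U 1 1 + U 1 2 * U 1 2 = 1 := by simpa using hrow 1 1
  have hr12 : U 1 0 * U 2 0 + U 1 1 * U 2 1 + U 1 2 * U 2 2 = 0 := by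
    have := hrow 1 2; simpa using this
  have hr20 : U 2 0 * U 0 0 + U 2 1 * U 0 1 + U 2 2 * U 0 2 = 0 := by
    have := hrow 2 0; simpa using this
  have hr21 : U 2 0 * U 1 0 + U 2 1 * U 1 1 + U 2 2 * U 1 2 = 0 := by
    have := hrow 2 1; simpa using this
  have hr22 : U 2 0 * U 2 0 + U 2 1 * U 2 1 + U 2 2 * U 2 2 = 1 := by simpa using hrow 2 2
  -- M * U = U * diagonal lam
  have hMUmat : M * U = U * Matrix.diagonal lam := by
    rw [hspec, Matrix.mul_assoc, hU1, Matrix.mul_one]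
  have hMU0 : ∀ k, -a₂₃ * U 0 k + a₁₃ * U 1 k + -a₁₂ * U 2 k = U 0 k * lam k := by
    intro k
    have h := congrFun (congrFun hMUmat 0) k
    fin_cases k <;>
      simpa [hM', Matrix.mul_apply, Fin.sum_univ_three, Matrix.diagonal] using h
  have hMU1 : ∀ k, a₁₃ * U 0 k + b₁₃ * U 1 k + -b₁₂ * U 2 k = U 1 k * lam k := by
    intro k
    have h := congrFun (congrFun hMUmat 1) k
    fin_cases k <;>
      simpa [hM', Matrix.mul_apply, Fin.sum_univ_three, Matrix.diagonal] using h
  have hMU2 : ∀ k, -a₁₂ * U 0 k + -b₁₂ * U 1 k + (a₂₃ - b₁₃) * U 2 k = U 2 k * lam k := by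
    intro k
    have h := congrFun (congrFun hMUmat 2) k
    fin_cases k <;>
      simpa [hM', Matrix.mul_apply, Fin.sum_univ_three, Matrix.diagonal] using h
  -- trace
  have htr : lam 0 + lam 1 + lam 2 = 0 := by
    have h1 : M.trace = 0 := by
      rw [Matrix.trace_fin_three, hM']
      simp
    have h2 : M.trace = lam 0 + lam 1 + lam 2 := by
      rw [hspec, Matrix.trace_mul_cycle, hU1, Matrix.one_mul, Matrix.trace_diagonal,
        Fin.sum_univ_three]
    linarith
  -- not all eigenvalues zero
  have hlnz : ¬(lam 0 = 0 ∧ lam 1 = 0 ∧ lam 2 = 0) := by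
    rintro ⟨hz0, hz1, hz2⟩
    have hD : Matrix.diagonal lam = 0 := by
      ext i j
      fin_cases i <;> fin_cases j <;> simp [Matrix.diagonal, hz0, hz1, hz2]
    have hM0 : M = 0 := by rw [hspec, hD, Matrix.mul_zero, Matrix.zero_mul]
    have z1 : a₂₃ = 0 := by
      have := congrFun (congrFun hM0 0) 0; simp [hM'] at this; linarith
    have z2 : a₁₃ = 0 := by
      have := congrFun (congrFun hM0 0) 1; simpa [hM'] using this
    have z3 : a₁₂ = 0 := by
      have := congrFun (congrFun hM0 0) 2; simp [hM'] at this; linarith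
    have z4 : b₁₃ = 0 := by
      have := congrFun (congrFun hM0 1) 1; simpa [hM'] using this
    have z5 : b₁₂ = 0 := by
      have := congrFun (congrFun hM0 1) 2; simp [hM'] at this; linarith
    exact hne (by simp [z1, z2, z3, z4, z5])
  -- determinant
  set d : ℝ := U.det with hd'
  have hd : d = U 0 0 * (U 1 1 * U 2 2 - U 2 1 * U 1 2)
      - U 0 1 * (U 1 0 * U 2 2 - U 2 0 * U 1 2)
      + U 0 2 * (U 1 0 * U 2 1 - U 2 0 * U 1 1) := by
    rw [hd', Matrix.det_fin_three]; ring
  have hdd : d * d = 1 := by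
    have h := congrArg Matrix.det hU2
    rwa [Matrix.det_mul, Matrix.det_one, Matrix.star_eq_conjTranspose,
      Matrix.det_conjTranspose, star_trivial] at h
  have hdne : d ≠ 0 := by
    intro h
    rw [h] at hdd
    norm_num at hdd
  -- cross product facts
  have hX120 : U 1 1 * U 2 2 - U 2 1 * U 1 2 = d * U 0 0 := by
    rw [hd]
    linear_combination (-(U 1 1 * U 2 2 - U 2 1 * U 1 2)) * hr00
      + (-(U 2 1 * U 0 2 - U 0 1 * U 2 2)) * hr01
      + (-(U 0 1 * U 1 2 - U 1 1 * U 0 2)) * hr02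
  have hX121 : U 2 1 * U 0 2 - U 0 1 * U 2 2 = d * U 1 0 := by
    rw [hd]
    linear_combination (-(U 1 1 * U 2 2 - U 2 1 * U 1 2)) * hr10
      + (-(U 2 1 * U 0 2 - U 0 1 * U 2 2)) * hr11
      + (-(U 0 1 * U 1 2 - U 1 1 * U 0 2)) * hr12
  have hX122 : U 0 1 * U 1 2 - U 1 1 * U 0 2 = d * U 2 0 := by
    rw [hd]
    linear_combination (-(U 1 1 * U 2 2 - U 2 1 * U 1 2)) * hr20
      + (-(U 2 1 * U 0 2 - U 0 1 * U 2 2)) * hr21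
      + (-(U 0 1 * U 1 2 - U 1 1 * U 0 2)) * hr22
  have hX200 : U 1 2 * U 2 0 - U 2 2 * U 1 0 = d * U 0 1 := by
    rw [hd]
    linear_combination (-(U 1 2 * U 2 0 - U 2 2 * U 1 0)) * hr00
      + (-(U 2 2 * U 0 0 - U 0 2 * U 2 0)) * hr01
      + (-(U 0 2 * U 1 0 - U 1 2 * U 0 0)) * hr02
  have hX201 : U 2 2 * U 0 0 - U 0 2 * U 2 0 = d * U 1 1 := by
    rw [hd]
    linear_combination (-(U 1 2 * U 2 0 - U 2 2 * U 1 0)) * hr10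
      + (-(U 2 2 * U 0 0 - U 0 2 * U 2 0)) * hr11
      + (-(U 0 2 * U 1 0 - U 1 2 * U 0 0)) * hr12
  have hX202 : U 0 2 * U 1 0 - U 1 2 * U 0 0 = d * U 2 1 := by
    rw [hd]
    linear_combination (-(U 1 2 * U 2 0 - U 2 2 * U 1 0)) * hr20
      + (-(U 2 2 * U 0 0 - U 0 2 * U 2 0)) * hr21
      + (-(U 0 2 * U 1 0 - U 1 2 * U 0 0)) * hr22
  have hX010 : U 1 0 * U 2 1 - U 2 0 * U 1 1 = d * U 0 2 := by
    rw [hd]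
    linear_combination (-(U 1 0 * U 2 1 - U 2 0 * U 1 1)) * hr00
      + (-(U 2 0 * U 0 1 - U 0 0 * U 2 1)) * hr01
      + (-(U 0 0 * U 1 1 - U 1 0 * U 0 1)) * hr02
  have hX011 : U 2 0 * U 0 1 - U 0 0 * U 2 1 = d * U 1 2 := by
    rw [hd]
    linear_combination (-(U 1 0 * U 2 1 - U 2 0 * U 1 1)) * hr10
      + (-(U 2 0 * U 0 1 - U 0 0 * U 2 1)) * hr11
      + (-(U 0 0 * U 1 1 - U 1 0 * U 0 1)) * hr12
  have hX012 : U 0 0 * U 1 1 - U 1 0 * U 0 1 = d * U 2 2 := by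
    rw [hd]
    linear_combination (-(U 1 0 * U 2 1 - U 2 0 * U 1 1)) * hr20
      + (-(U 2 0 * U 0 1 - U 0 0 * U 2 1)) * hr21
      + (-(U 0 0 * U 1 1 - U 1 0 * U 0 1)) * hr22
  -- the orthonormal eigen-frame in 𝔥
  set f : Fin 3 → 𝔥 := fun i => U 0 i • e 0 + U 1 i • e 1 + U 2 i • e 2 with hf'
  have oe00 : g (e 0) (e 0) = 1 := by simpa using horth 0 0
  have oe01 : g (e 0) (e 1) = 0 := by simpa using horth 0 1
  have oe02 : g (e 0) (e 2) = 0 := by simpa using horth 0 2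
  have oe10 : g (e 1) (e 0) = 0 := by simpa using horth 1 0
  have oe11 : g (e 1) (e 1) = 1 := by simpa using horth 1 1
  have oe12 : g (e 1) (e 2) = 0 := by simpa using horth 1 2
  have oe20 : g (e 2) (e 0) = 0 := by simpa using horth 2 0
  have oe21 : g (e 2) (e 1) = 0 := by simpa using horth 2 1
  have oe22 : g (e 2) (e 2) = 1 := by simpa using horth 2 2
  have horthf : ∀ i j, g (f i) (f j) = if i = j then 1 else 0 := by
    intro i j
    show g (U 0 i • e 0 + U 1 i • e 1 + U 2 i • e 2)
      (U 0 j • e 0 + U 1 j • e 1 + U 2 j • e 2) = _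
    simp only [map_add, map_smul, LinearMap.add_apply, LinearMap.smul_apply, smul_eq_mul,
      oe00, oe01, oe02, oe10, oe11, oe12, oe20, oe21, oe22]
    rw [← hcol i j]; ring
  -- skew bracket relations
  have hg21 : ⁅e 1, e 0⁆ = a₁₂ • e 0 + b₁₂ • e 1 + (b₁₃ - a₂₃) • e 2 := by
    rw [← lie_skew, h12]; module
  have hg31 : ⁅e 2, e 0⁆ = a₁₃ • e 0 + b₁₃ • e 1 - b₁₂ • e 2 := by
    rw [← lie_skew, h13]; module
  have hg32 : ⁅e 2, e 1⁆ = a₂₃ • e 0 - a₁₃ • e 1 + a₁₂ • e 2 := by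
    rw [← lie_skew, h23]; module
  -- brackets of the frame
  have hf12 : ⁅f 1, f 2⁆ = (d * lam 0) • f 0 := by
    show ⁅U 0 1 • e 0 + U 1 1 • e 1 + U 2 1 • e 2, U 0 2 • e 0 + U 1 2 • e 1 + U 2 2 • e 2⁆
      = (d * lam 0) • (U 0 0 • e 0 + U 1 0 • e 1 + U 2 0 • e 2)
    simp only [lie_add, add_lie, lie_smul, smul_lie, lie_self, smul_zero, add_zero, zero_add,
      h12, h13, h23, hg21, hg31, hg32]
    match_scalars
    · linear_combination (-a₂₃) * hX120 + a₁₃ * hX121 + (-a₁₂) * hX122 + d * hMU0 0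
    · linear_combination a₁₃ * hX120 + b₁₃ * hX121 + (-b₁₂) * hX122 + d * hMU1 0
    · linear_combination (-a₁₂) * hX120 + (-b₁₂) * hX121 + (a₂₃ - b₁₃) * hX122 + d * hMU2 0
  have hf20 : ⁅f 2, f 0⁆ = (d * lam 1) • f 1 := by
    show ⁅U 0 2 • e 0 + U 1 2 • e 1 + U 2 2 • e 2, U 0 0 • e 0 + U 1 0 • e 1 + U 2 0 • e 2⁆
      = (d * lam 1) • (U 0 1 • e 0 + U 1 1 • e 1 + U 2 1 • e 2)
    simp only [lie_add, add_lie, lie_smul, smul_lie, lie_self, smul_zero, add_zero, zero_add,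
      h12, h13, h23, hg21, hg31, hg32]
    match_scalars
    · linear_combination (-a₂₃) * hX200 + a₁₃ * hX201 + (-a₁₂) * hX202 + d * hMU0 1
    · linear_combination a₁₃ * hX200 + b₁₃ * hX201 + (-b₁₂) * hX202 + d * hMU1 1
    · linear_combination (-a₁₂) * hX200 + (-b₁₂) * hX201 + (a₂₃ - b₁₃) * hX202 + d * hMU2 1
  have hf01 : ⁅f 0, f 1⁆ = (d * lam 2) • f 2 := by
    show ⁅U 0 0 • e 0 + U 1 0 • e 1 + U 2 0 • e 2, U 0 1 • e 0 + U 1 1 • e 1 + U 2 1 • e 2⁆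
      = (d * lam 2) • (U 0 2 • e 0 + U 1 2 • e 1 + U 2 2 • e 2)
    simp only [lie_add, add_lie, lie_smul, smul_lie, lie_self, smul_zero, add_zero, zero_add,
      h12, h13, h23, hg21, hg31, hg32]
    match_scalars
    · linear_combination (-a₂₃) * hX010 + a₁₃ * hX011 + (-a₁₂) * hX012 + d * hMU0 2
    · linear_combination a₁₃ * hX010 + b₁₃ * hX011 + (-b₁₂) * hX012 + d * hMU1 2
    · linear_combination (-a₁₂) * hX010 + (-b₁₂) * hX011 + (a₂₃ - b₁₃) * hX012 + d * hMU2 2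
  -- apply the core classification
  have := core hfin g f ![d * lam 0, d * lam 1, d * lam 2] horthf
    (by simpa using hf12) (by simpa using hf20) (by simpa using hf01)
    (by show d * lam 0 + d * lam 1 + d * lam 2 = 0; linear_combination d * htr)
    (by
      rintro ⟨hz0, hz1, hz2⟩
      simp only [Matrix.cons_val_zero, Matrix.cons_val_one, Matrix.head_cons,
        Matrix.cons_val_two, Matrix.tail_cons, mul_eq_zero] at hz0 hz1 hz2
      exact hlnz ⟨hz0.resolve_left hdne, hz1.resolve_left hdne, hz2.resolve_left hdne⟩)
  exact this
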